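/- arXiv:1612.05832 — 6 statements merged into one kernel-verified Lean document; each statement's English description precedes it below -/
import Mathlib

section
/- Let λ < -1/4 and let θ ∈ (0, π/2) be such that λ = -1/(2 cos θ)². Then for every integer n ≥ 1, the hard-core partition function of the path with n vertices is Z_{P_n}(λ) = sin((n+2)θ) / (2^n (cos θ)^n sin(2θ)). -/
open scoped Classical

/-- The set of independent sets of a finite simple graph `G`, as a `Finset` of `Finset`s
(including the empty set). -/
noncomputable def indepFinsets {V : Type*} [Fintype V] (G : SimpleGraph V) : Finset (Finset V) :=
  Finset.univ.filter fun I => ∀ u ∈ I, ∀ w ∈ I, ¬ G.Adj u w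

/-- The hard-core partition function `Z_G(λ) = ∑_{I ∈ I_G} λ^{|I|}`. -/
noncomputable def hcZ {V : Type*} [Fintype V] (G : SimpleGraph V) (lam : ℝ) : ℝ :=
  ∑ I ∈ indepFinsets G, lam ^ I.card

/-- `Z^{in}_{G,v}(λ)`: contribution of independent sets containing `v`. -/
noncomputable def hcZin {V : Type*} [Fintype V] (G : SimpleGraph V) (v : V) (lam : ℝ) : ℝ :=
  ∑ I ∈ (indepFinsets G).filter (fun I => v ∈ I), lam ^ I.card

/-- `Z^{out}_{G,v}(λ)`: contribution of independent sets not containing `v`. -/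
noncomputable def hcZout {V : Type*} [Fintype V] (G : SimpleGraph V) (v : V) (lam : ℝ) : ℝ :=
  ∑ I ∈ (indepFinsets G).filter (fun I => v ∉ I), lam ^ I.card

noncomputable def natIndep (n : ℕ) : Finset (Finset ℕ) :=
  (Finset.range n).powerset.filter (fun I => ∀ k ∈ I, k + 1 ∉ I)

noncomputable def Znat (n : ℕ) (lam : ℝ) : ℝ := ∑ I ∈ natIndep n, lam ^ I.card

lemma hcZ_eq_Znat (n : ℕ) (lam : ℝ) : hcZ (SimpleGraph.pathGraph n) lam = Znat n lam := by
  unfold hcZ Znat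
  refine Finset.sum_bij' (fun I _ => I.image Fin.val)
    (fun J hJ => J.attachFin (fun m hm => by
      have := (Finset.mem_filter.mp hJ).1
      exact Finset.mem_range.mp (Finset.mem_powerset.mp this hm)))
    ?_ ?_ ?_ ?_ ?_
  · intro I hI
    simp only [indepFinsets, Finset.mem_filter, Finset.mem_univ, true_and] at hI
    simp only [natIndep, Finset.mem_filter, Finset.mem_powerset]
    constructor
    · intro m hm
      simp only [Finset.mem_image] at hm
      obtain ⟨a, _, rfl⟩ := hm
      exact Finset.mem_range.mpr a.isLt
    · intro k hk hk1
      simp only [Finset.mem_image] at hk hk1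
      obtain ⟨a, ha, rfl⟩ := hk
      obtain ⟨b, hb, hab⟩ := hk1
      exact hI a ha b hb (SimpleGraph.pathGraph_adj.mpr (Or.inl hab.symm))
  · intro J hJ
    simp only [natIndep, Finset.mem_filter] at hJ
    simp only [indepFinsets, Finset.mem_filter, Finset.mem_univ, true_and]
    intro u hu w hw hadj
    rw [Finset.mem_attachFin] at hu hw
    rcases SimpleGraph.pathGraph_adj.mp hadj with h | h
    · exact hJ.2 u.val hu (h ▸ hw)
    · exact hJ.2 w.val hw (h ▸ hu)
  · intro I hI
    ext a
    simp [Finset.mem_attachFin, Fin.val_inj]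
  · intro J hJ
    ext m
    simp only [Finset.mem_image, Finset.mem_attachFin]
    constructor
    · rintro ⟨a, ha, rfl⟩; exact ha
    · intro hm
      have hmlt : m < n := by
        have := (Finset.mem_filter.mp hJ).1
        exact Finset.mem_range.mp (Finset.mem_powerset.mp this hm)
      exact ⟨⟨m, hmlt⟩, hm, rfl⟩
  · intro I hI
    rw [Finset.card_image_of_injective _ Fin.val_injective]

lemma Znat_rec (n : ℕ) (lam : ℝ) : Znat (n + 2) lam = Znat (n + 1) lam + lam * Znat n lam := by
  unfold Znat
  rw [← Finset.sum_filter_add_sum_filter_not (natIndep (n+2)) (fun I => n + 1 ∉ I)]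
  congr 1
  · apply Finset.sum_congr _ (fun _ _ => rfl)
    ext I
    simp only [natIndep, Finset.mem_filter, Finset.mem_powerset, and_assoc]
    constructor
    · rintro ⟨hsub, hind, hn1⟩
      refine ⟨fun m hm => ?_, hind⟩
      have h2 := Finset.mem_range.mp (hsub hm)
      refine Finset.mem_range.mpr ?_
      by_contra h
      have hm1 : m = n + 1 := by omega
      exact hn1 (hm1 ▸ hm)
    · rintro ⟨hsub, hind⟩
      refine ⟨hsub.trans (Finset.range_subset_range.mpr (by omega)), hind, fun h => ?_⟩
      have := Finset.mem_range.mp (hsub h)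
      omega
  · rw [Finset.mul_sum]
    refine Finset.sum_bij' (fun I _ => I.erase (n+1)) (fun J _ => insert (n+1) J) ?_ ?_ ?_ ?_ ?_
    · intro I hI
      simp only [Finset.mem_filter, natIndep, Finset.mem_powerset, not_not] at hI
      obtain ⟨⟨hsub, hind⟩, hmem⟩ := hI
      simp only [natIndep, Finset.mem_filter, Finset.mem_powerset]
      constructor
      · intro m hm
        rw [Finset.mem_erase] at hm
        have h1 := Finset.mem_range.mp (hsub hm.2)
        have hn : n ∉ I := fun hn => hind n hn hmem
        refine Finset.mem_range.mpr ?_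
        rcases Nat.lt_or_ge m n with h | h
        · exact h
        · exfalso
          have : m = n ∨ m = n + 1 := by omega
          rcases this with rfl | rfl
          · exact hn hm.2
          · exact hm.1 rfl
      · intro k hk
        rw [Finset.mem_erase] at hk
        intro hk1
        exact hind k hk.2 (Finset.mem_of_mem_erase hk1)
    · intro J hJ
      simp only [natIndep, Finset.mem_filter, Finset.mem_powerset] at hJ ⊢
      obtain ⟨hsub, hind⟩ := hJ
      refine ⟨⟨fun m hm => ?_, ?_⟩, not_not.mpr (Finset.mem_insert_self _ _)⟩
      · rcases Finset.mem_insert.mp hm with rfl | hm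
        · exact Finset.mem_range.mpr (by omega)
        · exact Finset.mem_range.mpr (by have := Finset.mem_range.mp (hsub hm); omega)
      · intro k hk hk1
        rcases Finset.mem_insert.mp hk with rfl | hk
        · rcases Finset.mem_insert.mp hk1 with h | h
          · omega
          · have := Finset.mem_range.mp (hsub h); omega
        · rcases Finset.mem_insert.mp hk1 with h | h
          · have := Finset.mem_range.mp (hsub hk); omega
          · exact hind k hk h
    · intro I hI
      simp only [Finset.mem_filter, not_not] at hI
      exact Finset.insert_erase hI.2
    · intro J hJ
      simp only [natIndep, Finset.mem_filter, Finset.mem_powerset] at hJ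
      have : n + 1 ∉ J := fun h => by have := Finset.mem_range.mp (hJ.1 h); omega
      exact Finset.erase_insert this
    · intro I hI
      simp only [Finset.mem_filter, not_not] at hI
      rw [Finset.card_erase_of_mem hI.2, ← pow_succ']
      congr 1
      have : 0 < I.card := Finset.card_pos.mpr ⟨n+1, hI.2⟩
      omega

lemma Znat_zero (lam : ℝ) : Znat 0 lam = 1 := by
  have : natIndep 0 = {∅} := by
    ext I
    simp [natIndep, Finset.subset_empty]
    rintro rfl
    simp
  simp [Znat, this]

lemma Znat_one (lam : ℝ) : Znat 1 lam = 1 + lam := by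
  have : natIndep 1 = {∅, {0}} := by
    ext I
    simp only [natIndep, Finset.mem_filter, Finset.mem_powerset, Finset.range_one,
      Finset.subset_singleton_iff, Finset.mem_insert, Finset.mem_singleton]
    constructor
    · rintro ⟨h, -⟩; exact h
    · rintro (rfl | rfl) <;> simp
  rw [Znat, this, Finset.sum_pair (by decide)]
  simp

lemma sin_three_step (x θ : ℝ) :
    Real.sin (x + θ) = 2 * Real.cos θ * Real.sin x - Real.sin (x - θ) := by
  rw [Real.sin_add, Real.sin_sub]; ring

lemma Znat_closed (lam θ : ℝ) (hθ : θ ∈ Set.Ioo 0 (Real.pi / 2))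
    (hrel : lam = -1 / (2 * Real.cos θ) ^ 2)
    (Zrec : ∀ n, Znat (n + 2) lam = Znat (n + 1) lam + lam * Znat n lam) (n : ℕ) :
    Znat n lam = Real.sin ((n + 2) * θ) / (2 ^ n * (Real.cos θ) ^ n * Real.sin (2 * θ)) := by
  obtain ⟨hθ0, hθ2⟩ := hθ
  have hc : 0 < Real.cos θ := Real.cos_pos_of_mem_Ioo ⟨by linarith [Real.pi_pos], hθ2⟩
  have hs : 0 < Real.sin θ := Real.sin_pos_of_pos_of_lt_pi hθ0 (by linarith [Real.pi_pos])
  have hs2 : Real.sin (2 * θ) = 2 * Real.sin θ * Real.cos θ := Real.sin_two_mul θ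
  have hs2pos : 0 < Real.sin (2 * θ) := by rw [hs2]; positivity
  induction n using Nat.twoStepInduction with
  | zero =>
      rw [Znat_zero]
      norm_num
      rw [div_self hs2pos.ne']
  | one =>
      rw [Znat_one]
      have h3 : ((1 : ℕ) + 2 : ℝ) * θ = 2 * θ + θ := by push_cast; ring
      rw [h3, Real.sin_add, hs2, Real.cos_two_mul, hrel]
      field_simp
      ring
  | more n ih2 ih1 =>
      rw [Zrec n, ih1, ih2]
      have e1 : ((n + 2 : ℕ) + 2 : ℝ) * θ = ((n + 1 : ℕ) + 2 : ℝ) * θ + θ := by push_cast; ring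
      have e2 : ((n : ℕ) + 2 : ℝ) * θ = ((n + 1 : ℕ) + 2 : ℝ) * θ - θ := by push_cast; ring
      rw [e1, sin_three_step, ← e2, hrel]
      have h2 : (0:ℝ) < 2 ^ n := by positivity
      have hcn : (0:ℝ) < Real.cos θ ^ n := by positivity
      field_simp
      ring


/-- Let `λ < -1/4` and `θ ∈ (0, π/2)` with `λ = -1/(2 cos θ)²`. Then for every `n ≥ 1`,
`Z_{P_n}(λ) = sin((n+2)θ) / (2^n (cos θ)^n sin(2θ))`. -/
theorem hcZ_path_closed_form (lam θ : ℝ) (hlam : lam < -1/4)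
    (hθ : θ ∈ Set.Ioo 0 (Real.pi / 2)) (hrel : lam = -1 / (2 * Real.cos θ) ^ 2)
    (n : ℕ) (hn : 1 ≤ n) :
    hcZ (SimpleGraph.pathGraph n) lam =
      Real.sin ((n + 2) * θ) / (2 ^ n * (Real.cos θ) ^ n * Real.sin (2 * θ)) := by
  rw [hcZ_eq_Znat]
  exact Znat_closed lam θ hθ hrel (fun m => Znat_rec m lam) n
end

section
/- Let λ < -1/4 be such that λ ∉ B. Let P_n denote the path with n vertices and let v be one of the endpoints of P_n. Then for every λ' ∈ ℝ and every ε > 0, there exists a positive integer n such that Z^{out}_{P_n,v}(λ) ≠ 0 and |Z^{in}_{P_n,v}(λ)/Z^{out}_{P_n,v}(λ) - λ'| ≤ ε. -/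
open scoped Classical

/-- The "bad" set `B`: reals `λ` of the form `-1/(4 cos² θ)` for some `θ ∈ (0, π/2)`
which is a rational multiple of `π`. -/
def badSet : Set ℝ :=
  {lam | ∃ θ : ℝ, θ ∈ Set.Ioo 0 (Real.pi / 2) ∧ (∃ q : ℚ, θ = (q : ℝ) * Real.pi) ∧
    lam = -1 / (4 * (Real.cos θ) ^ 2)}

/-!
Deleting the endpoint `0` of `P_{n+1}` leaves `P_n`, and deleting its closed neighbourhood leaves
`P_{n-1}`; hence `Z^{out}_{P_{n+1}} = Z_{P_n}`, `Z^{in}_{P_{n+1}} = λ Z_{P_{n-1}}`, and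
`Z_{P_{n+1}} = Z_{P_n} + λ Z_{P_{n-1}}`. For `λ = -ρ²` with `2ρ cos θ = 1` (possible exactly when
`λ < -1/4`) this linear recursion has characteristic roots `ρ e^{± iθ}`, so
`sin θ · Z_{P_{n-1}} = ρⁿ sin ((n + 1) θ)` and the ratio `Z^{in}/Z^{out}` on `P_n` equals
`g (n θ)` with `g x = -ρ sin x / sin (x + θ)`. The function `g` is `π`-periodic, continuous and
onto `ℝ`, and `λ ∉ B` means that `θ / π` is irrational, so `n θ` is dense modulo `π`.
-/

open Finset SimpleGraph

lemma mem_indepFinsets {V : Type*} [Fintype V] {G : SimpleGraph V} {I : Finset V} :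
    I ∈ indepFinsets G ↔ ∀ u ∈ I, ∀ w ∈ I, ¬ G.Adj u w := by
  simp [indepFinsets]

lemma hcZ_eq_hcZin_add_hcZout {V : Type*} [Fintype V] (G : SimpleGraph V) (v : V) (lam : ℝ) :
    hcZ G lam = hcZin G v lam + hcZout G v lam :=
  (sum_filter_add_sum_filter_not _ _ _).symm

section PathGraph

variable {n : ℕ}

lemma pathGraph_adj_succ_succ (i j : Fin n) :
    (pathGraph (n + 1)).Adj i.succ j.succ ↔ (pathGraph n).Adj i j := by
  simp only [pathGraph_adj, Fin.val_succ]; omega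

lemma pathGraph_adj_succ_zero (j : Fin (n + 1)) : (pathGraph (n + 2)).Adj j.succ 0 ↔ j = 0 := by
  simp only [pathGraph_adj, Fin.val_succ, Fin.val_zero, Fin.ext_iff]; omega

lemma pathGraph_adj_zero_succ (j : Fin (n + 1)) : (pathGraph (n + 2)).Adj 0 j.succ ↔ j = 0 := by
  rw [adj_comm, pathGraph_adj_succ_zero]

lemma map_succEmb_preimage_succ (I : Finset (Fin (n + 1))) :
    (I.preimage Fin.succ (Fin.succ_injective n).injOn).map (Fin.succEmb n) = I.erase 0 := by
  ext x
  cases x using Fin.cases <;> simp [Fin.succ_ne_zero]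

lemma map_succEmb_mem_indepFinsets {J : Finset (Fin n)} :
    J.map (Fin.succEmb n) ∈ indepFinsets (pathGraph (n + 1)) ↔ J ∈ indepFinsets (pathGraph n) := by
  simp [mem_indepFinsets, pathGraph_adj_succ_succ]

lemma insert_zero_map_succEmb_mem_indepFinsets {J : Finset (Fin (n + 1))} :
    insert 0 (J.map (Fin.succEmb (n + 1))) ∈ indepFinsets (pathGraph (n + 2)) ↔
      J ∈ indepFinsets (pathGraph (n + 1)) ∧ 0 ∉ J := by
  simp only [mem_indepFinsets, forall_mem_insert, forall_mem_map, Fin.coe_succEmb,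
    pathGraph_adj_succ_succ, pathGraph_adj_zero_succ, pathGraph_adj_succ_zero, SimpleGraph.irrefl]
  aesop

lemma hcZout_pathGraph_succ (lam : ℝ) :
    hcZout (pathGraph (n + 1)) 0 lam = hcZ (pathGraph n) lam := by
  rw [hcZout, filter_congr_decidable]
  symm
  refine sum_nbij' (·.map (Fin.succEmb n)) (·.preimage Fin.succ (Fin.succ_injective n).injOn)
    (fun J hJ ↦ ?_) (fun I hI ↦ ?_) (fun J _ ↦ preimage_map _ J) (fun I hI ↦ ?_)
    (fun J _ ↦ by rw [card_map])
  · simp [mem_filter, map_succEmb_mem_indepFinsets.2 hJ, Fin.succ_ne_zero]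
  · obtain ⟨hI, h0⟩ := mem_filter.1 hI
    rwa [← map_succEmb_mem_indepFinsets, map_succEmb_preimage_succ, erase_eq_of_notMem h0]
  · rw [map_succEmb_preimage_succ, erase_eq_of_notMem (mem_filter.1 hI).2]

lemma hcZin_pathGraph_succ_succ (lam : ℝ) :
    hcZin (pathGraph (n + 2)) 0 lam = lam * hcZout (pathGraph (n + 1)) 0 lam := by
  rw [hcZout, filter_congr_decidable, hcZin, filter_congr_decidable, mul_sum]
  symm
  refine sum_nbij' (fun J ↦ insert 0 (J.map (Fin.succEmb (n + 1))))
    (·.preimage Fin.succ (Fin.succ_injective (n + 1)).injOn)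
    (fun J hJ ↦ ?_) (fun I hI ↦ ?_) (fun J _ ↦ ?_) (fun I hI ↦ ?_) (fun J _ ↦ ?_)
  · simp [mem_filter, insert_zero_map_succEmb_mem_indepFinsets.2 (mem_filter.1 hJ)]
  · obtain ⟨hI, h0⟩ := mem_filter.1 hI
    rw [← insert_erase h0, ← map_succEmb_preimage_succ] at hI
    exact mem_filter.2 (insert_zero_map_succEmb_mem_indepFinsets.1 hI)
  · ext x
    simp [Fin.succ_ne_zero]
  · rw [map_succEmb_preimage_succ, insert_erase (mem_filter.1 hI).2]
  · rw [card_insert_of_notMem (by simp [Fin.succ_ne_zero]), card_map, pow_succ']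

lemma hcZin_pathGraph_one (lam : ℝ) : hcZin (pathGraph 1) 0 lam = lam := by
  have : (indepFinsets (pathGraph 1)).filter (fun I => 0 ∈ I) = {{0}} := by
    ext I
    simp [mem_indepFinsets, eq_singleton_iff_unique_mem, Fin.fin_one_eq_zero]
  rw [hcZin, filter_congr_decidable, this, sum_singleton, card_singleton, pow_one]

lemma hcZ_pathGraph_zero (lam : ℝ) : hcZ (pathGraph 0) lam = 1 := by
  simp [hcZ, indepFinsets, univ_unique, eq_empty_of_isEmpty]

end PathGraph

/-- `pathZ lam (n + 1) = Z_{P_n}(lam)`; the initial value `pathZ lam 0 = 1` makes the formula for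
`hcZin` below also hold for `P_1`. -/
noncomputable def pathZ (lam : ℝ) : ℕ → ℝ
  | 0 => 1
  | 1 => 1
  | n + 2 => pathZ lam (n + 1) + lam * pathZ lam n

lemma hcZout_hcZin_pathGraph_eq_pathZ (lam : ℝ) (n : ℕ) :
    hcZout (pathGraph (n + 1)) 0 lam = pathZ lam (n + 1) ∧
      hcZin (pathGraph (n + 1)) 0 lam = lam * pathZ lam n := by
  induction n with
  | zero => exact ⟨by rw [hcZout_pathGraph_succ, hcZ_pathGraph_zero, pathZ], by
      rw [hcZin_pathGraph_one, pathZ, mul_one]⟩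
  | succ n ih =>
    refine ⟨?_, by rw [hcZin_pathGraph_succ_succ, ih.1]⟩
    rw [hcZout_pathGraph_succ, hcZ_eq_hcZin_add_hcZout _ 0, ih.1, ih.2, pathZ]
    ring

open Real

section Trigonometric

variable {ρ θ : ℝ}

lemma sin_mul_pathZ (hcos : 2 * ρ * cos θ = 1) (n : ℕ) :
    sin θ * pathZ (-ρ ^ 2) n = ρ ^ n * sin ((n + 1) * θ) := by
  induction n using Nat.twoStepInduction with
  | zero => simp [pathZ]
  | one =>
    rw [pathZ, mul_one, pow_one, Nat.cast_one, one_add_one_eq_two, sin_two_mul]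
    linear_combination (-sin θ) * hcos
  | more n ih₀ ih₁ =>
    have h₀ : ((n : ℝ) + 1) * θ = (n + 2) * θ - θ := by ring
    have h₁ : (((n + 1 : ℕ) : ℝ) + 1) * θ = (n + 2) * θ := by push_cast; ring
    have h₂ : (((n + 2 : ℕ) : ℝ) + 1) * θ = (n + 2) * θ + θ := by push_cast; ring
    rw [pathZ, mul_add, ih₁, mul_left_comm, ih₀, h₀, h₁, h₂, sin_add, sin_sub]
    -- `sin (x + θ) + sin (x - θ) = 2 cos θ sin x` with `x = (n + 2) θ`
    linear_combination (-ρ ^ (n + 1) * sin ((n + 2) * θ)) * hcos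

lemma sin_nat_mul_ne_zero (hθ : Irrational (θ / π)) {n : ℕ} (hn : n ≠ 0) : sin (n * θ) ≠ 0 := by
  intro h
  obtain ⟨k, hk⟩ := sin_eq_zero_iff.1 h
  refine (hθ.natCast_mul hn).ne_int k ?_
  rw [← mul_div_assoc, ← hk]
  field_simp [pi_ne_zero]

lemma pathZ_ne_zero (hcos : 2 * ρ * cos θ = 1) (hθ : Irrational (θ / π)) (n : ℕ) :
    pathZ (-ρ ^ 2) n ≠ 0 := by
  have hρ : ρ ≠ 0 := by rintro rfl; simp at hcos
  have hsin : sin ((n + 1) * θ) ≠ 0 := by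
    simpa using sin_nat_mul_ne_zero hθ n.succ_ne_zero
  intro h
  have := sin_mul_pathZ hcos n
  rw [h, mul_zero] at this
  exact mul_ne_zero (pow_ne_zero n hρ) hsin this.symm

noncomputable def angleRatio (ρ θ x : ℝ) : ℝ := -ρ * sin x / sin (x + θ)

lemma angleRatio_periodic : Function.Periodic (angleRatio ρ θ) π := fun x ↦ by
  simp only [angleRatio, add_right_comm x π θ, sin_add_pi]
  ring

lemma continuousAt_angleRatio {x : ℝ} (hx : sin (x + θ) ≠ 0) : ContinuousAt (angleRatio ρ θ) x := by
  unfold angleRatio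
  fun_prop (disch := exact hx)

lemma exists_angleRatio_eq (hρ : ρ ≠ 0) (hθ : sin θ ≠ 0) (y : ℝ) :
    ∃ x, sin (x + θ) ≠ 0 ∧ angleRatio ρ θ x = y := by
  set z : ℂ := ⟨-(ρ + y * cos θ), y * sin θ⟩
  have hz : z ≠ 0 := by
    intro h
    obtain ⟨hre, him⟩ := Complex.ext_iff.1 h
    have hy : y = 0 := (mul_eq_zero.1 him).resolve_right hθ
    simp [z, hy, hρ] at hre
  have hnorm : ‖z‖ ≠ 0 := norm_ne_zero_iff.2 hz
  have hsin : sin (z.arg + θ) = -ρ * sin θ / ‖z‖ := by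
    rw [sin_add, Complex.sin_arg, Complex.cos_arg hz]
    field_simp
    simp [z]
    ring
  refine ⟨z.arg, by rw [hsin]; exact div_ne_zero (mul_ne_zero (neg_ne_zero.2 hρ) hθ) hnorm, ?_⟩
  rw [angleRatio, hsin, Complex.sin_arg]
  field_simp
  simp [z, mul_comm]

lemma div_pathZ_eq_angleRatio (hcos : 2 * ρ * cos θ = 1) (hθ : Irrational (θ / π)) (n : ℕ) :
    -ρ ^ 2 * pathZ (-ρ ^ 2) n / pathZ (-ρ ^ 2) (n + 1) = angleRatio ρ θ ((n + 1 : ℕ) * θ) := by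
  have hsin : sin ((n + 1 : ℕ) * θ + θ) ≠ 0 := by
    convert sin_nat_mul_ne_zero hθ (n + 1).succ_ne_zero using 2
    push_cast
    ring
  have h₀ := sin_mul_pathZ hcos n
  have h₁ := sin_mul_pathZ hcos (n + 1)
  push_cast at h₀ h₁ hsin ⊢
  rw [angleRatio, div_eq_div_iff (pathZ_ne_zero hcos hθ _) hsin]
  apply mul_left_cancel₀ (by simpa using sin_nat_mul_ne_zero hθ one_ne_zero : sin θ ≠ 0)
  rw [show ((n : ℝ) + 1 + 1) * θ = (n + 1) * θ + θ by ring] at h₁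
  linear_combination (-ρ ^ 2 * sin ((n + 1) * θ + θ)) * h₀ + (ρ * sin ((n + 1) * θ)) * h₁

end Trigonometric

lemma exists_eq_neg_sq_and_two_mul_cos_eq_one {lam : ℝ} (hlam : lam < -1 / 4) :
    ∃ ρ θ, lam = -ρ ^ 2 ∧ 2 * ρ * cos θ = 1 ∧ θ ∈ Set.Ioo 0 (π / 2) := by
  set ρ := √(-lam)
  have hρ : 1 / 2 < ρ := lt_sqrt (by norm_num) |>.2 (by linarith)
  have hc₀ : 0 < 1 / (2 * ρ) := by positivity
  have hc₁ : 1 / (2 * ρ) < 1 := (div_lt_one (by linarith)).2 (by linarith)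
  refine ⟨ρ, arccos (1 / (2 * ρ)), by rw [sq_sqrt (by linarith), neg_neg], ?_,
    arccos_pos.2 hc₁, arccos_lt_pi_div_two.2 hc₀⟩
  rw [cos_arccos (by linarith) hc₁.le]
  field_simp

lemma irrational_div_pi_of_notMem_badSet {ρ θ : ℝ} (hbad : -ρ ^ 2 ∉ badSet)
    (hcos : 2 * ρ * cos θ = 1) (hθ : θ ∈ Set.Ioo 0 (π / 2)) : Irrational (θ / π) := by
  rintro ⟨q, hq⟩
  refine hbad ⟨θ, hθ, ⟨q, by rw [hq, div_mul_cancel₀ _ pi_ne_zero]⟩, ?_⟩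
  have hc : cos θ ≠ 0 := by rintro h; simp [h] at hcos
  field_simp
  linear_combination (-(2 * ρ * cos θ + 1)) * hcos

lemma exists_pos_nat_abs_mul_sub_int_mul_sub_lt {θ p : ℝ} (hp : 0 < p)
    (hirr : Irrational (θ / p)) (x : ℝ) {δ : ℝ} (hδ : 0 < δ) :
    ∃ n : ℕ, 0 < n ∧ ∃ k : ℤ, |n * θ - k * p - x| < δ := by
  have := Fact.mk hp
  have hcluster : MapClusterPt (x : AddCircle p) Filter.atTop (· • (θ : AddCircle p) : ℕ → _) :=
    ((mapClusterPt_atTop_nsmul_tfae _ _).out 0 3).2 (AddCircle.denseRange_zsmul_coe_iff.2 hirr _)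
  obtain ⟨n, hnx, hn⟩ := ((hcluster.frequently (Metric.ball_mem_nhds _ hδ)).and_eventually
    (Filter.eventually_gt_atTop 0)).exists
  refine ⟨n, hn, round (p⁻¹ * (n * θ - x)), ?_⟩
  rw [dist_eq_norm, ← AddCircle.coe_nsmul, ← AddCircle.coe_sub,
    AddCircle.norm_eq, nsmul_eq_mul] at hnx
  rwa [sub_right_comm]

/-- Let `λ < -1/4` with `λ ∉ B`. Then for every `λ' ∈ ℝ` and every `ε > 0` there exists a
positive integer `n` such that, `v` being an endpoint of the path `P_n`,
`Z^{out}_{P_n,v}(λ) ≠ 0` and `|Z^{in}_{P_n,v}(λ)/Z^{out}_{P_n,v}(λ) - λ'| ≤ ε`. -/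
theorem path_implements_dense (lam : ℝ) (hlam : lam < -1/4) (hbad : lam ∉ badSet)
    (lam' ε : ℝ) (hε : 0 < ε) :
    ∃ (n : ℕ) (hn : 0 < n),
      hcZout (SimpleGraph.pathGraph n) ⟨0, hn⟩ lam ≠ 0 ∧
      |hcZin (SimpleGraph.pathGraph n) ⟨0, hn⟩ lam /
          hcZout (SimpleGraph.pathGraph n) ⟨0, hn⟩ lam - lam'| ≤ ε := by
  obtain ⟨ρ, θ, rfl, hcos, hθ⟩ := exists_eq_neg_sq_and_two_mul_cos_eq_one hlam
  have hirr := irrational_div_pi_of_notMem_badSet hbad hcos hθ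
  have hρ : ρ ≠ 0 := by rintro rfl; simp at hcos
  have hsin : sin θ ≠ 0 := by simpa using sin_nat_mul_ne_zero hirr one_ne_zero
  obtain ⟨x, hx, hx_eq⟩ := exists_angleRatio_eq hρ hsin lam'
  obtain ⟨δ, hδ, hball⟩ := Metric.continuousAt_iff.1 (continuousAt_angleRatio hx) ε hε
  obtain ⟨n, hn, k, hk⟩ := exists_pos_nat_abs_mul_sub_int_mul_sub_lt pi_pos hirr x hδ
  obtain ⟨m, rfl⟩ := Nat.exists_eq_add_one_of_ne_zero hn.ne'
  obtain ⟨hout, hin⟩ := hcZout_hcZin_pathGraph_eq_pathZ (-ρ ^ 2) m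
  have h0 : (⟨0, hn⟩ : Fin (m + 1)) = 0 := rfl
  refine ⟨m + 1, hn, ?_, ?_⟩
  · rw [h0, hout]
    exact pathZ_ne_zero hcos hirr _
  · rw [h0, hin, hout, div_pathZ_eq_angleRatio hcos hirr, ← angleRatio_periodic.sub_int_mul_eq k,
      ← hx_eq]
    exact (hball hk).le
end

section
/- Let Δ ≥ 3 be an integer and let λ < 0. Suppose that there exist finite bipartite simple graphs G₋ and G₊ of maximum degree at most Δ with vertices v₋ of degree 1 in G₋ and v₊ of degree 1 in G₊ such that Z^{out}_{G₋,v₋}(λ) ≠ 0, Z^{in}_{G₋,v₋}(λ)/Z^{out}_{G₋,v₋}(λ) = -1, Z^{out}_{G₊,v₊}(λ) ≠ 0, and Z^{in}_{G₊,v₊}(λ)/Z^{out}_{G₊,v₊}(λ) = +1. Then for every z ∈ S there exists a finite bipartite simple graph G of maximum degree at most Δ and a vertex v of G of degree 1 such that Z^{out}_{G,v}(λ) ≠ 0 and Z^{in}_{G,v}(λ)/Z^{out}_{G,v}(λ) = λz. -/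
open scoped Classical

/-- The set `S ⊆ ℝ`: `z ∈ S` iff there is a finite sequence starting at `0`, ending at
`z`, each step applying `f₊(x) = 1/(1+x)` (with `x ≠ -1`) or `f₋(x) = 1/(1-x)`
(with `x ≠ 1`). -/
def ratioSet : Set ℝ :=
  {z | ∃ (n : ℕ) (x : ℕ → ℝ), x 0 = 0 ∧ x n = z ∧
    ∀ i < n, (x i ≠ -1 ∧ x (i + 1) = 1 / (1 + x i)) ∨ (x i ≠ 1 ∧ x (i + 1) = 1 / (1 - x i))}

/-!
Root a graph at a vertex `n` and record the pair `(Z^out_{G,n}(λ), Z_G(λ))` up to a nonzero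
factor. Joining the roots of two rooted graphs to a new root `r` gives `Z^out_r = Z_1 Z_2` and
`Z^in_r = λ Z^out_1 Z^out_2`, so pairs combine as `(P₁, Q₁), (P₂, Q₂) ↦ (Q₁Q₂, Q₁Q₂ + λP₁P₂)`;
the new root has degree 2 and its neighbours gain one edge each, which `Δ ≥ 3` accommodates.
Deleting the leaf `v±` of `G±` leaves the pair `(±1, λ)` at its neighbour, and combining `(x, 1)`
with it gives `(1/(1 ± x), 1)` up to scaling: these are the maps `f±`. The starting pair `(0, 1)`
is `G₋` rooted at `v₋` (pair `(1, 0)`, as `Z = Z^in + Z^out = 0`) combined with `(1, λ)`. Finally a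
pendant vertex hung on a root realizing `(z, 1)` sees the ratio `λ z`.
-/

open Finset SimpleGraph

namespace HardCore

variable {V W : Type*}

section Sums

variable [Fintype V] [Fintype W]

lemma mem_indepFinsets {G : SimpleGraph V} {I : Finset V} :
    I ∈ indepFinsets G ↔ ∀ u ∈ I, ∀ w ∈ I, ¬ G.Adj u w := by
  simp [indepFinsets]

lemma hcZ_eq_hcZin_add_hcZout (G : SimpleGraph V) (v : V) (lam : ℝ) :
    hcZ G lam = hcZin G v lam + hcZout G v lam :=
  (sum_filter_add_sum_filter_not _ _ _).symm

lemma map_mem_indepFinsets_iff {G : SimpleGraph V} {H : SimpleGraph W} (f : G ↪g H)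
    {I : Finset V} : I.map f.toEmbedding ∈ indepFinsets H ↔ I ∈ indepFinsets G := by
  simp [mem_indepFinsets]

lemma filter_indepFinsets_subset_range {G : SimpleGraph V} {H : SimpleGraph W} (f : G ↪g H) :
    (indepFinsets H).filter (fun J => ↑J ⊆ Set.range f) =
      (indepFinsets G).map (mapEmbedding f.toEmbedding).toEmbedding := by
  ext J
  simp only [mem_filter, mem_map, RelEmbedding.coe_toEmbedding, mapEmbedding_apply]
  constructor
  · rintro ⟨hJ, hsub⟩
    obtain ⟨I, -, rfl⟩ := subset_map_iff.mp (show J ⊆ univ.map f.toEmbedding by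
      intro w hw; simpa using hsub hw)
    exact ⟨I, (map_mem_indepFinsets_iff f).mp hJ, rfl⟩
  · rintro ⟨I, hI, rfl⟩
    refine ⟨(map_mem_indepFinsets_iff f).mpr hI, ?_⟩
    simp [Set.subset_def]

lemma sum_indepFinsets_embedding {G : SimpleGraph V} {H : SimpleGraph W} (f : G ↪g H)
    {p : Finset V → Prop} {r : Finset W → Prop} [DecidablePred p] [DecidablePred r]
    (hp : ∀ I, p I ↔ r (I.map f.toEmbedding)) (hr : ∀ J, r J → ↑J ⊆ Set.range f) (lam : ℝ) :
    ∑ I ∈ (indepFinsets G).filter p, lam ^ #I = ∑ J ∈ (indepFinsets H).filter r, lam ^ #J := by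
  have hfilter : (indepFinsets H).filter r =
      ((indepFinsets H).filter (fun J => ↑J ⊆ Set.range f)).filter r := by
    rw [filter_filter]
    exact filter_congr fun J _ => ⟨fun h => ⟨hr J h, h⟩, And.right⟩
  rw [hfilter, filter_indepFinsets_subset_range, filter_map, sum_map]
  simp only [Function.comp_def, RelEmbedding.coe_toEmbedding, mapEmbedding_apply, card_map]
  exact sum_congr (filter_congr fun I _ => hp I) fun _ _ => rfl

lemma hcZin_eq_mul_sum (G : SimpleGraph V) (v : V) (lam : ℝ) :
    hcZin G v lam =
      lam * ∑ I ∈ (indepFinsets G).filter (fun I => v ∉ I ∧ ∀ u ∈ I, ¬ G.Adj v u), lam ^ #I := by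
  rw [hcZin, mul_sum]
  symm
  refine sum_nbij' (insert v) (fun I => I.erase v) ?_ ?_ ?_ ?_ ?_
  · intro I hI
    simp only [mem_filter, mem_indepFinsets] at hI ⊢
    obtain ⟨hI, hv, hadj⟩ := hI
    refine ⟨?_, mem_insert_self v I⟩
    simp only [mem_insert, forall_eq_or_imp]
    exact ⟨⟨G.loopless.irrefl v, hadj⟩, fun u hu => ⟨fun h => hadj u hu h.symm, hI u hu⟩⟩
  · intro I hI
    simp only [mem_filter, mem_indepFinsets] at hI ⊢
    exact ⟨fun u hu w hw => hI.1 u (mem_of_mem_erase hu) w (mem_of_mem_erase hw),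
      notMem_erase v I, fun u hu => hI.1 v hI.2 u (mem_of_mem_erase hu)⟩
  · intro I hI
    exact erase_insert (mem_filter.mp hI).2.1
  · intro I hI
    exact insert_erase (mem_filter.mp hI).2
  · intro I hI
    rw [card_insert_of_notMem (mem_filter.mp hI).2.1, pow_succ']

lemma hcZin_iso {G : SimpleGraph V} {H : SimpleGraph W} (e : G ≃g H) (v : V)
    (lam : ℝ) : hcZin H (e v) lam = hcZin G v lam :=
  (sum_indepFinsets_embedding e.toEmbedding (fun I => (mem_map' _).symm) (fun J _ => by
    simp [e.surjective.range_eq]) lam).symm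

lemma hcZout_iso {G : SimpleGraph V} {H : SimpleGraph W} (e : G ≃g H) (v : V)
    (lam : ℝ) : hcZout H (e v) lam = hcZout G v lam :=
  (sum_indepFinsets_embedding e.toEmbedding (fun I => (mem_map' _).not.symm) (fun J _ => by
    simp [e.surjective.range_eq]) lam).symm

lemma mem_indepFinsets_sum {A : SimpleGraph V} {B : SimpleGraph W} {I : Finset (V ⊕ W)} :
    I ∈ indepFinsets (A ⊕g B) ↔ I.toLeft ∈ indepFinsets A ∧ I.toRight ∈ indepFinsets B := by
  simp only [mem_indepFinsets, mem_toLeft, mem_toRight]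
  constructor
  · intro h
    exact ⟨fun u hu w hw => h _ hu _ hw, fun u hu w hw => h _ hu _ hw⟩
  · rintro ⟨hA, hB⟩ (u | u) hu (w | w) hw <;> simp_all

lemma sum_indepFinsets_sum (A : SimpleGraph V) (B : SimpleGraph W) (p : Finset V → Prop)
    (q : Finset W → Prop) [DecidablePred p] [DecidablePred q] (lam : ℝ) :
    ∑ I ∈ (indepFinsets (A ⊕g B)).filter (fun I => p I.toLeft ∧ q I.toRight), lam ^ #I =
      (∑ I ∈ (indepFinsets A).filter p, lam ^ #I) * ∑ J ∈ (indepFinsets B).filter q, lam ^ #J := by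
  rw [sum_mul_sum, ← sum_product']
  refine sum_equiv sumEquiv.toEquiv (fun I => ?_) (fun I _ => ?_)
  · simp only [mem_filter, mem_product, mem_indepFinsets_sum, RelIso.coe_fn_toEquiv,
      sumEquiv_apply_fst, sumEquiv_apply_snd]
    tauto
  · simp only [RelIso.coe_fn_toEquiv, sumEquiv_apply_fst, sumEquiv_apply_snd]
    rw [← pow_add, card_toLeft_add_card_toRight]

lemma hcZ_sum (A : SimpleGraph V) (B : SimpleGraph W) (lam : ℝ) :
    hcZ (A ⊕g B) lam = hcZ A lam * hcZ B lam := by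
  simpa [hcZ] using sum_indepFinsets_sum A B (fun _ => True) (fun _ => True) lam

end Sums

lemma degree_sum_inl (A : SimpleGraph V) (B : SimpleGraph W) (u : V) [Fintype (A.neighborSet u)]
    [Fintype ((A ⊕g B).neighborSet (.inl u))] :
    (A ⊕g B).degree (.inl u) = A.degree u := by
  rw [← card_neighborSet_eq_degree, ← card_neighborSet_eq_degree]
  simp only [neighborSet_sum_inl]
  exact Set.card_image_of_injective _ Sum.inl_injective

lemma degree_sum_inr (A : SimpleGraph V) (B : SimpleGraph W) (w : W) [Fintype (B.neighborSet w)]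
    [Fintype ((A ⊕g B).neighborSet (.inr w))] :
    (A ⊕g B).degree (.inr w) = B.degree w := by
  rw [← card_neighborSet_eq_degree, ← card_neighborSet_eq_degree]
  simp only [neighborSet_sum_inr]
  exact Set.card_image_of_injective _ Sum.inr_injective

def addVertex (G : SimpleGraph V) (N : Finset V) : SimpleGraph (Option V) where
  Adj x y := match x, y with
    | some u, some w => G.Adj u w
    | some u, none => u ∈ N
    | none, some w => w ∈ N
    | none, none => False
  symm := ⟨by rintro (_ | u) (_ | w) h <;> first | exact h | exact G.adj_symm h⟩
  loopless := ⟨by rintro (_ | u) h <;> first | exact h | exact G.loopless.irrefl u h⟩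

section addVertex

variable {G : SimpleGraph V} {N : Finset V}

@[simp] lemma addVertex_adj_some_some {u w : V} :
    (addVertex G N).Adj (some u) (some w) ↔ G.Adj u w := .rfl

@[simp] lemma addVertex_adj_none_some {w : V} : (addVertex G N).Adj none (some w) ↔ w ∈ N := .rfl

@[simp] lemma addVertex_adj_some_none {u : V} : (addVertex G N).Adj (some u) none ↔ u ∈ N := .rfl

@[simp] lemma not_addVertex_adj_none_none : ¬ (addVertex G N).Adj none none := id

variable (G N) in
def someEmbedding : G ↪g addVertex G N where
  toEmbedding := .some
  map_rel_iff' := .rfl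

@[simp] lemma coe_someEmbedding : ⇑(someEmbedding G N) = some := rfl

lemma coe_subset_range_some {J : Finset (Option V)} (h : none ∉ J) :
    (↑J : Set (Option V)) ⊆ Set.range some := by
  rintro (_ | u) hu
  · exact absurd hu h
  · exact ⟨u, rfl⟩

lemma colorable_addVertex (C : G.Coloring Bool) {c : Bool} (hN : ∀ u ∈ N, C u = c) :
    (addVertex G N).Colorable 2 := by
  refine Coloring.colorable (α := Bool) ⟨fun x => x.elim (!c) C, ?_⟩
  rintro (_ | u) (_ | w) h
  · exact absurd h not_addVertex_adj_none_none
  · simp [hN w h]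
  · simp [hN u h]
  · exact C.valid h

variable [Fintype V]

lemma hcZout_addVertex_none (G : SimpleGraph V) (N : Finset V) (lam : ℝ) :
    hcZout (addVertex G N) none lam = hcZ G lam := by
  rw [hcZ, ← filter_true (indepFinsets G), hcZout]
  convert (sum_indepFinsets_embedding (someEmbedding G N) (p := fun _ => True) (by simp)
    (fun J => coe_subset_range_some) lam).symm

lemma hcZin_addVertex_none [DecidableEq V] (G : SimpleGraph V) (N : Finset V) (lam : ℝ) :
    hcZin (addVertex G N) none lam =
      lam * ∑ I ∈ (indepFinsets G).filter (fun I => Disjoint I N), lam ^ #I := by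
  rw [hcZin_eq_mul_sum]
  congr 1
  convert (sum_indepFinsets_embedding (someEmbedding G N) (p := fun I => Disjoint I N)
    (r := fun J => none ∉ J ∧ ∀ u ∈ J, ¬ (addVertex G N).Adj none u) (fun I => ?_)
    (fun J hJ => coe_subset_range_some hJ.1) lam).symm
  simp [Finset.disjoint_left]

lemma hcZin_addVertex_singleton (G : SimpleGraph V) (n : V) (lam : ℝ) :
    hcZin (addVertex G {n}) none lam = lam * hcZout G n lam := by
  classical
  rw [hcZin_addVertex_none, hcZout]
  convert rfl using 3
  exact filter_congr fun I _ => by simp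

lemma neighborFinset_addVertex_none :
    (addVertex G N).neighborFinset none = N.map .some := by
  ext (_ | w) <;> simp

lemma degree_addVertex_none :
    (addVertex G N).degree none = #N := by
  rw [← card_neighborFinset_eq_degree, neighborFinset_addVertex_none, card_map]

lemma degree_addVertex_some (u : V) :
    (addVertex G N).degree (some u) = G.degree u + if u ∈ N then 1 else 0 := by
  rw [← card_neighborFinset_eq_degree, ← card_neighborFinset_eq_degree]
  split_ifs with hu
  · have h : (addVertex G N).neighborFinset (some u) = insertNone (G.neighborFinset u) := by
      ext (_ | w) <;> simp [hu]
    rw [h, card_insertNone]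
  · have h : (addVertex G N).neighborFinset (some u) = (G.neighborFinset u).map .some := by
      ext (_ | w) <;> simp [hu]
    rw [h, card_map, add_zero]

lemma degree_addVertex_le {Δ : ℕ} (hG : ∀ u, G.degree u ≤ Δ)
    (hN : ∀ u ∈ N, G.degree u < Δ) (hcard : #N ≤ Δ) (x : Option V) :
    (addVertex G N).degree x ≤ Δ := by
  cases x with
  | none => rw [degree_addVertex_none]; exact hcard
  | some u =>
    rw [degree_addVertex_some]
    split_ifs with hu
    · exact hN u hu
    · exact hG u

end addVertex

section deleteVertex

variable {G : SimpleGraph V}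

lemma degree_induce_le (s : Set V) (u : s) [Fintype ((G.induce s).neighborSet u)]
    [Fintype (G.neighborSet u)] : (G.induce s).degree u ≤ G.degree u := by
  rw [← card_neighborSet_eq_degree, ← card_neighborSet_eq_degree]
  exact Fintype.card_le_of_injective (fun w => ⟨w.1.1, w.2⟩)
    fun w w' h => Subtype.ext (Subtype.ext (by simpa using congrArg Subtype.val h))

lemma degree_induce_compl_singleton_lt {v n : V} (h : G.Adj n v) [Fintype (G.neighborSet n)]
    [Fintype ((G.induce {v}ᶜ).neighborSet ⟨n, h.ne⟩)] :
    (G.induce {v}ᶜ).degree ⟨n, h.ne⟩ < G.degree n := by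
  rw [← card_neighborSet_eq_degree, ← card_neighborSet_eq_degree]
  refine Fintype.card_lt_of_injective_of_notMem (fun u => ⟨u.1.1, u.2⟩) (fun u w huw => ?_)
    (b := ⟨v, h⟩) ?_
  · exact Subtype.ext (Subtype.ext (by simpa using congrArg Subtype.val huw))
  · rintro ⟨u, hu⟩
    exact u.1.2 (congrArg Subtype.val hu)

variable [Fintype V]

lemma hcZ_induce_compl_singleton (G : SimpleGraph V) (v : V) (lam : ℝ) :
    hcZ (G.induce {v}ᶜ) lam = hcZout G v lam := by
  rw [hcZ, ← filter_true (indepFinsets _), hcZout]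
  convert sum_indepFinsets_embedding (Embedding.induce {v}ᶜ) (p := fun _ => True)
    (r := fun J => v ∉ J) (by simp) (fun J hJ => ?_) lam
  rintro u hu
  exact ⟨⟨u, by rintro rfl; exact hJ hu⟩, rfl⟩

/-- An independent set through the leaf `v` is `v` together with an independent set of `G - v`
avoiding `n`. -/
lemma hcZin_eq_mul_hcZout_induce {v n : V} (hv : ∀ u, G.Adj v u ↔ u = n) (lam : ℝ) :
    hcZin G v lam = lam * hcZout (G.induce {v}ᶜ) ⟨n, ((hv n).2 rfl).ne'⟩ lam := by
  rw [hcZin_eq_mul_sum, hcZout]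
  congr 1
  convert (sum_indepFinsets_embedding (Embedding.induce {v}ᶜ)
    (p := fun I => ⟨n, ((hv n).2 rfl).ne'⟩ ∉ I)
    (r := fun J => v ∉ J ∧ ∀ u ∈ J, ¬ G.Adj v u) (fun I => ?_) (fun J hJ => ?_) lam).symm
  · simp only [mem_map, RelEmbedding.coe_toEmbedding, Embedding.comap_apply,
      Function.Embedding.subtype_apply, hv, forall_exists_index, and_imp]
    exact ⟨fun h => ⟨fun ⟨w, _, hw⟩ => w.2 hw,
      fun u w hw hwu hun => h (by subst hwu hun; exact hw)⟩,
      fun h hnI => h.2 n _ hnI rfl rfl⟩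
  · rintro u hu
    exact ⟨⟨u, by rintro rfl; exact hJ.1 hu⟩, rfl⟩

end deleteVertex

section link

variable {A : SimpleGraph V} {B : SimpleGraph W} {a : V} {b : W}

lemma colorable_addVertex_sum (hA : A.Colorable 2) (hB : B.Colorable 2) :
    (addVertex (A ⊕g B) {.inl a, .inr b}).Colorable 2 := by
  let CA : A.Coloring Bool := hA.toColoring (by simp)
  let CB : B.Coloring Bool := hB.toColoring (by simp)
  let σ := Equiv.swap (CB b) (CA a)
  refine colorable_addVertex (CA.sum (Coloring.mk (σ ∘ CB) fun h => σ.injective.ne (CB.valid h)))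
    (c := CA a) ?_
  simp [Coloring.sum, σ, Coloring.mk]

variable [Fintype V] [Fintype W]

lemma hcZin_addVertex_sum (A : SimpleGraph V) (B : SimpleGraph W) (a : V) (b : W) (lam : ℝ) :
    hcZin (addVertex (A ⊕g B) {.inl a, .inr b}) none lam =
      lam * (hcZout A a lam * hcZout B b lam) := by
  rw [hcZin_addVertex_none, hcZout, hcZout, ← sum_indepFinsets_sum]
  congr 1
  convert rfl using 2
  exact filter_congr fun I _ => by simp

end link

/-- Since `Z_G = Z^in + Z^out`, this encodes the ratio `Z^in/Z^out = Q/P - 1` at `n` projectively,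
so that `Z^out = 0` is allowed. -/
def Realizable (Δ : ℕ) (lam P Q : ℝ) : Prop :=
  ∃ (V : Type) (_ : Fintype V) (G : SimpleGraph V) (n : V),
    G.Colorable 2 ∧ (∀ u, G.degree u ≤ Δ) ∧ G.degree n < Δ ∧
    ∃ t ≠ 0, hcZout G n lam = t * P ∧ hcZ G lam = t * Q

namespace Realizable

variable {Δ : ℕ} {lam P Q P₁ Q₁ P₂ Q₂ : ℝ}

lemma of_graph {V : Type} [Fintype V] {G : SimpleGraph V} {n : V} (hcol : G.Colorable 2)
    (hdeg : ∀ u, G.degree u ≤ Δ) (hn : G.degree n < Δ) {t : ℝ} (ht : t ≠ 0)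
    (hP : hcZout G n lam = t * P) (hQ : hcZ G lam = t * Q) : Realizable Δ lam P Q :=
  ⟨V, _, G, n, hcol, hdeg, hn, t, ht, hP, hQ⟩

lemma of_eq_mul (h : Realizable Δ lam P Q) {c P' Q' : ℝ} (hc : c ≠ 0) (hP : P' = c * P)
    (hQ : Q' = c * Q) : Realizable Δ lam P' Q' := by
  obtain ⟨V, _, G, n, hcol, hdeg, hn, t, ht, htP, htQ⟩ := h
  refine of_graph hcol hdeg hn (div_ne_zero ht hc) ?_ ?_
  · rw [htP, hP]; field_simp
  · rw [htQ, hQ]; field_simp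

/-- Joining the roots of two realizing graphs to a new root. -/
lemma link (hΔ : 3 ≤ Δ) (h₁ : Realizable Δ lam P₁ Q₁) (h₂ : Realizable Δ lam P₂ Q₂) :
    Realizable Δ lam (Q₁ * Q₂) (Q₁ * Q₂ + lam * (P₁ * P₂)) := by
  obtain ⟨V, _, A, a, hAcol, hAdeg, ha, t₁, ht₁, hP₁, hQ₁⟩ := h₁
  obtain ⟨W, _, B, b, hBcol, hBdeg, hb, t₂, ht₂, hP₂, hQ₂⟩ := h₂
  have hN : #({.inl a, .inr b} : Finset (V ⊕ W)) = 2 := card_pair Sum.inl_ne_inr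
  have hout : hcZout (addVertex (A ⊕g B) {.inl a, .inr b}) none lam = t₁ * t₂ * (Q₁ * Q₂) := by
    rw [hcZout_addVertex_none, hcZ_sum, hQ₁, hQ₂]; ring
  refine of_graph (colorable_addVertex_sum hAcol hBcol) (degree_addVertex_le ?_ ?_ (by omega))
    (by rw [degree_addVertex_none, hN]; omega) (mul_ne_zero ht₁ ht₂) hout ?_
  · rintro (u | w)
    · rw [degree_sum_inl]; exact hAdeg u
    · rw [degree_sum_inr]; exact hBdeg w
  · simp only [mem_insert, mem_singleton]
    rintro _ (rfl | rfl)
    · rwa [degree_sum_inl]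
    · rwa [degree_sum_inr]
  · rw [hcZ_eq_hcZin_add_hcZout _ none, hcZin_addVertex_sum, hout, hP₁, hP₂]; ring

lemma step {x σ : ℝ} (hΔ : 3 ≤ Δ) (hlam : lam ≠ 0)
    (hx : Realizable Δ lam x 1) (hσ : Realizable Δ lam σ lam) (hne : 1 + σ * x ≠ 0) :
    Realizable Δ lam (1 / (1 + σ * x)) 1 :=
  (hx.link hΔ hσ).of_eq_mul (inv_ne_zero (mul_ne_zero hlam hne)) (by field_simp) (by field_simp)

end Realizable

section construction

variable {Δ : ℕ} {lam : ℝ}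

lemma realizable_of_ratio {s : ℝ} {V : Type} [Fintype V] {G : SimpleGraph V} {v : V}
    (hcol : G.Colorable 2) (hdeg : ∀ u, G.degree u ≤ Δ) (hv : G.degree v < Δ)
    (hZ : hcZout G v lam ≠ 0) (hs : hcZin G v lam / hcZout G v lam = s) :
    Realizable Δ lam 1 (1 + s) := by
  refine Realizable.of_graph hcol hdeg hv hZ (mul_one _).symm ?_
  rw [hcZ_eq_hcZin_add_hcZout G v, ← hs]
  field_simp
  ring

lemma realizable_of_leaf {s : ℝ} (hlam : lam ≠ 0) {V : Type} [Fintype V]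
    {G : SimpleGraph V} {v : V} (hcol : G.Colorable 2) (hdeg : ∀ u, G.degree u ≤ Δ)
    (hv : G.degree v = 1) (hZ : hcZout G v lam ≠ 0) (hs : hcZin G v lam / hcZout G v lam = s) :
    Realizable Δ lam s lam := by
  obtain ⟨n, hn⟩ := degree_eq_one_iff_existsUnique_adj.mp hv
  have hadj : ∀ u, G.Adj v u ↔ u = n := fun u => ⟨hn.2 u, fun h => h ▸ hn.1⟩
  refine Realizable.of_graph (G := G.induce {v}ᶜ) (n := ⟨n, hn.1.ne'⟩)
    (hcol.of_hom (Embedding.induce _).toHom) (fun u => (degree_induce_le _ u).trans (hdeg u))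
    ((degree_induce_compl_singleton_lt hn.1.symm).trans_le (hdeg n)) (div_ne_zero hZ hlam) ?_ ?_
  · rw [← hs, hcZin_eq_mul_hcZout_induce hadj lam]
    field_simp
  · rw [hcZ_induce_compl_singleton]
    field_simp

lemma realizable_of_mem_ratioSet {z : ℝ} (hΔ : 3 ≤ Δ) (hlam : lam ≠ 0)
    (h₀ : Realizable Δ lam 0 1) (hm : Realizable Δ lam (-1) lam) (hp : Realizable Δ lam 1 lam)
    (hz : z ∈ ratioSet) : Realizable Δ lam z 1 := by
  obtain ⟨N, x, hx₀, rfl, hstep⟩ := hz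
  suffices ∀ i ≤ N, Realizable Δ lam (x i) 1 from this N le_rfl
  intro i
  induction i with
  | zero => exact fun _ => hx₀ ▸ h₀
  | succ i ih =>
    intro (hi : i < N)
    rcases hstep i hi with ⟨hne, hxi⟩ | ⟨hne, hxi⟩
    · rw [hxi, ← one_mul (x i)]
      exact (ih hi.le).step hΔ hlam hp (by rw [one_mul]; contrapose! hne; linarith)
    · rw [hxi, sub_eq_add_neg, neg_eq_neg_one_mul]
      exact (ih hi.le).step hΔ hlam hm (by contrapose! hne; linarith)

lemma exists_leaf_of_realizable {z : ℝ} (h : Realizable Δ lam z 1) :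
    ∃ (V : Type) (_ : Fintype V) (G : SimpleGraph V) (v : V), G.Colorable 2 ∧
      (∀ u, G.degree u ≤ Δ) ∧ G.degree v = 1 ∧ hcZout G v lam ≠ 0 ∧
      hcZin G v lam / hcZout G v lam = lam * z := by
  obtain ⟨V, _, K, n, hcol, hdeg, hn, t, ht, hP, hQ⟩ := h
  have hout : hcZout (addVertex K {n}) none lam = t := by
    rw [hcZout_addVertex_none, hQ, mul_one]
  let C : K.Coloring Bool := hcol.toColoring (by simp)
  refine ⟨Option V, inferInstance, addVertex K {n}, none,
    colorable_addVertex C (c := C n) fun u hu => ?_,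
    degree_addVertex_le hdeg (by simpa using hn) (by rw [card_singleton]; omega),
    by rw [degree_addVertex_none, card_singleton], hout ▸ ht, ?_⟩
  · exact congrArg _ (mem_singleton.mp hu)
  · rw [hout, hcZin_addVertex_singleton, hP]
    field_simp

end construction

end HardCore

open HardCore

/-- Let `Δ ≥ 3` and `λ < 0`. Suppose there are finite bipartite simple graphs `G₋, G₊` of
maximum degree at most `Δ` with degree-one vertices `v₋, v₊` implementing the activities
`-1` and `+1` respectively. Then for every `z ∈ S` there is a finite bipartite simple
graph `G` of maximum degree at most `Δ` with a degree-one vertex `v` such that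
`Z^{out}_{G,v}(λ) ≠ 0` and `Z^{in}_{G,v}(λ)/Z^{out}_{G,v}(λ) = λz`. -/
theorem implements_lambda_S (Δ : ℕ) (hΔ : 3 ≤ Δ) (lam : ℝ) (hlam : lam < 0)
    {Wm : Type} [Fintype Wm] (Gm : SimpleGraph Wm) (vm : Wm)
    {Wp : Type} [Fintype Wp] (Gp : SimpleGraph Wp) (vp : Wp)
    (hGmbip : Gm.Colorable 2) (hGmdeg : ∀ u : Wm, Gm.degree u ≤ Δ) (hvm : Gm.degree vm = 1)
    (hZm : hcZout Gm vm lam ≠ 0) (hm : hcZin Gm vm lam / hcZout Gm vm lam = -1)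
    (hGpbip : Gp.Colorable 2) (hGpdeg : ∀ u : Wp, Gp.degree u ≤ Δ) (hvp : Gp.degree vp = 1)
    (hZp : hcZout Gp vp lam ≠ 0) (hp : hcZin Gp vp lam / hcZout Gp vp lam = 1)
    (z : ℝ) (hz : z ∈ ratioSet) :
    ∃ (k : ℕ) (G : SimpleGraph (Fin k)) (v : Fin k),
      G.Colorable 2 ∧ (∀ u : Fin k, G.degree u ≤ Δ) ∧ G.degree v = 1 ∧
      hcZout G v lam ≠ 0 ∧ hcZin G v lam / hcZout G v lam = lam * z := by
  have hlam₀ := hlam.ne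
  have hm' := realizable_of_leaf (Δ := Δ) hlam₀ hGmbip hGmdeg hvm hZm hm
  have hp' := realizable_of_leaf (Δ := Δ) hlam₀ hGpbip hGpdeg hvp hZp hp
  have h₁₀ : Realizable Δ lam 1 0 :=
    (realizable_of_ratio hGmbip hGmdeg (by omega) hZm hm).of_eq_mul one_ne_zero (by ring) (by ring)
  have h₀₁ : Realizable Δ lam 0 1 :=
    (h₁₀.link hΔ hp').of_eq_mul (inv_ne_zero hlam₀) (by ring) (by field_simp; ring)
  obtain ⟨V, _, G, v, hcol, hdeg, hv, hZ, hratio⟩ :=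
    exists_leaf_of_realizable (realizable_of_mem_ratioSet hΔ hlam₀ h₀₁ hm' hp' hz)
  let e := G.overFinIso rfl
  refine ⟨_, G.overFin rfl, e v, hcol.of_hom e.symm.toHom, fun u => ?_, by rwa [e.degree_eq],
    by rwa [hcZout_iso], by rwa [hcZin_iso, hcZout_iso]⟩
  rw [← e.apply_symm_apply u, e.degree_eq]
  exact hdeg _
end

section
/- The set S equals ℚ, the set of all rational numbers; that is, a real number z belongs to S if and only if z is rational. -/
lemma ratioSet_subset_of_closed {T : Set ℝ} (h0 : (0 : ℝ) ∈ T)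
    (hadd : ∀ x ∈ T, x ≠ -1 → 1 / (1 + x) ∈ T) (hsub : ∀ x ∈ T, x ≠ 1 → 1 / (1 - x) ∈ T) :
    ratioSet ⊆ T := by
  rintro _ ⟨n, x, hx0, rfl, hstep⟩
  suffices ∀ i ≤ n, x i ∈ T from this n le_rfl
  intro i hi
  induction i with
  | zero => rwa [hx0]
  | succ i ih =>
    rcases hstep i hi with ⟨hne, heq⟩ | ⟨hne, heq⟩
    · exact heq ▸ hadd _ (ih (by omega)) hne
    · exact heq ▸ hsub _ (ih (by omega)) hne

lemma zero_mem_ratioSet : (0 : ℝ) ∈ ratioSet :=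
  ⟨0, fun _ => 0, rfl, rfl, fun _ h => absurd h (Nat.not_lt_zero _)⟩

lemma mem_ratioSet_of_step {x y : ℝ} (hx : x ∈ ratioSet)
    (h : (x ≠ -1 ∧ y = 1 / (1 + x)) ∨ (x ≠ 1 ∧ y = 1 / (1 - x))) : y ∈ ratioSet := by
  obtain ⟨n, s, hs0, rfl, hs⟩ := hx
  refine ⟨n + 1, fun i => if i ≤ n then s i else y, by simp [hs0], by simp, fun i hi => ?_⟩
  rcases (Nat.lt_succ_iff.mp hi).lt_or_eq with hi | rfl
  · simpa [hi.le, Nat.succ_le_of_lt hi] using hs i hi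
  · simpa using h

lemma one_div_one_add_mem_ratioSet {x : ℝ} (hx : x ∈ ratioSet) (h : x ≠ -1) :
    1 / (1 + x) ∈ ratioSet :=
  mem_ratioSet_of_step hx (.inl ⟨h, rfl⟩)

lemma one_div_one_sub_mem_ratioSet {x : ℝ} (hx : x ∈ ratioSet) (h : x ≠ 1) :
    1 / (1 - x) ∈ ratioSet :=
  mem_ratioSet_of_step hx (.inr ⟨h, rfl⟩)

lemma one_add_inv_mem_ratioSet {x : ℝ} (hx : x ∈ ratioSet) (h : 0 < x) :
    1 + x⁻¹ ∈ ratioSet := by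
  have hx0 : x ≠ 0 := h.ne'
  have hx1 : 1 + x ≠ 0 := by positivity
  have hne : 1 / (1 + x) ≠ 1 := by
    rw [Ne, div_eq_one_iff_eq (by positivity)]
    linarith
  convert one_div_one_sub_mem_ratioSet (one_div_one_add_mem_ratioSet hx (by linarith)) hne
    using 1
  rw [one_sub_div hx1, add_sub_cancel_left]
  field_simp
  ring

lemma natCast_div_mem_ratioSet (a b : ℕ) (hb : 0 < b) : (a / b : ℝ) ∈ ratioSet := by
  rcases Nat.eq_zero_or_pos a with rfl | ha
  · simpa using zero_mem_ratioSet
  rcases le_or_gt a b with hab | hab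
  · obtain ⟨c, rfl⟩ := Nat.exists_eq_add_of_le hab
    have hc := natCast_div_mem_ratioSet c a ha
    convert one_div_one_add_mem_ratioSet hc (neg_one_lt_zero.trans_le (by positivity)).ne' using 1
    field_simp
    push_cast
    ring
  · obtain ⟨c, rfl⟩ := Nat.exists_eq_add_of_lt hab
    have hc := natCast_div_mem_ratioSet b (c + 1) (by omega)
    convert one_add_inv_mem_ratioSet hc (by positivity) using 1
    field_simp
    push_cast
    ring
termination_by a + b

lemma ratCast_mem_ratioSet_of_nonneg {q : ℚ} (hq : 0 ≤ q) : (q : ℝ) ∈ ratioSet := by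
  obtain ⟨n, hn⟩ := Int.eq_ofNat_of_zero_le (Rat.num_nonneg.mpr hq)
  have hcast : (q : ℝ) = n / q.den := by
    rw [Rat.cast_def, hn, Int.cast_natCast]
  exact hcast ▸ natCast_div_mem_ratioSet n q.den q.pos

lemma ratCast_mem_ratioSet (q : ℚ) : (q : ℝ) ∈ ratioSet := by
  rcases le_or_gt 0 q with hq | hq
  · exact ratCast_mem_ratioSet_of_nonneg hq
  have hinv : q⁻¹ < 0 := inv_lt_zero.mpr hq
  have hmem := ratCast_mem_ratioSet_of_nonneg (q := 1 - q⁻¹) (by linarith)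
  have hne : ((1 - q⁻¹ : ℚ) : ℝ) ≠ 1 := by
    exact_mod_cast (by linarith : 1 - q⁻¹ ≠ 1)
  convert one_div_one_sub_mem_ratioSet hmem hne using 1
  have hq0 : (q : ℝ) ≠ 0 := by exact_mod_cast hq.ne
  push_cast
  field_simp
  ring

/-- The set `S` is exactly the set of rational numbers: a real `z` belongs to `S` iff `z`
is rational. -/
theorem ratioSet_eq_rationals : ratioSet = Set.range ((↑) : ℚ → ℝ) := by
  refine Set.Subset.antisymm (ratioSet_subset_of_closed ⟨0, Rat.cast_zero⟩ ?_ ?_) ?_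
  · rintro _ ⟨q, rfl⟩ -
    exact ⟨1 / (1 + q), by push_cast; rfl⟩
  · rintro _ ⟨q, rfl⟩ -
    exact ⟨1 / (1 - q), by push_cast; rfl⟩
  · rintro _ ⟨q, rfl⟩
    exact ratCast_mem_ratioSet q
end

section
/- Let β, γ be real numbers with 0 < β < 1/3 and 0 < γ < 1/3. Then there exist real numbers x, y > 0 with x ≠ y such that x = ((βy + 1)/(y + γ))² and y = ((βx + 1)/(x + γ))². -/
set_option maxHeartbeats 1000000


/-- Let `0 < β < 1/3` and `0 < γ < 1/3`. Then there are reals `x, y > 0` with `x ≠ y`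
such that `x = ((βy + 1)/(y + γ))²` and `y = ((βx + 1)/(x + γ))²`. -/
theorem nonuniqueness_fixpoints (β γ : ℝ) (hβ₀ : 0 < β) (hβ₁ : β < 1/3)
    (hγ₀ : 0 < γ) (hγ₁ : γ < 1/3) :
    ∃ x y : ℝ, 0 < x ∧ 0 < y ∧ x ≠ y ∧
      x = ((β * y + 1) / (y + γ)) ^ 2 ∧ y = ((β * x + 1) / (x + γ)) ^ 2 := by
  have hA : (0:ℝ) < β^2 + γ := by positivity
  obtain ⟨s, hs⟩ : ∃ s : ℝ, s = (1 - β*γ)/(β^2+γ) := ⟨_, rfl⟩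
  have hkey : s * (β^2+γ) = 1 - β*γ := by rw [hs]; exact div_mul_cancel₀ _ (ne_of_gt hA)
  -- the auxiliary square root w = √(β²+γ)
  obtain ⟨w, hwdef⟩ : ∃ w : ℝ, w = Real.sqrt (β^2+γ) := ⟨_, rfl⟩
  have hw0 : 0 ≤ w := hwdef ▸ Real.sqrt_nonneg _
  have hw2 : w^2 = β^2+γ := by rw [hwdef]; exact Real.sq_sqrt hA.le
  have hwlt : w < 2/3 := by nlinarith [hw2, hw0]
  -- key inequality: s > 2β + 2w
  have hident : 1 - β*γ - (2*β + 2*w) * (β^2+γ) =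
      3*β*(1/3-γ) + 2*w*(1/3-γ) + 2*(2/3-w)*(β^2+1/3)
      + (1/3-β)*(2*β^2+2*β+5/3) := by ring
  have hskey : (2*β + 2*w) * (β^2+γ) < 1 - β*γ := by
    have t1 : 0 < 3*β*(1/3-γ) := by nlinarith
    have t2 : 0 ≤ 2*w*(1/3-γ) := by nlinarith
    have t3 : 0 < 2*(2/3-w)*(β^2+1/3) := by nlinarith
    have t4 : 0 ≤ (1/3-β)*(2*β^2+2*β+5/3) := by nlinarith
    linarith [hident, t1, t2, t3, t4]
  have hsgt : 2*β + 2*w < s := by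
    rw [hs, lt_div_iff₀ hA]; exact hskey
  have hs0 : 0 < s := by nlinarith
  -- discriminant
  have hD : 0 < s^2 - 4*β*s - 4*γ := by
    have p1 : 0 < s - 2*β - 2*w := by linarith
    have p2 : 0 < s - 2*β + 2*w := by linarith
    have := mul_pos p1 p2
    nlinarith [hw2, this]
  obtain ⟨r, hrdef⟩ : ∃ r : ℝ, r = Real.sqrt (s^2 - 4*β*s - 4*γ) := ⟨_, rfl⟩
  have hr0 : 0 < r := hrdef ▸ Real.sqrt_pos.mpr hD
  have hr2 : r^2 = s^2 - 4*β*s - 4*γ := by rw [hrdef]; exact Real.sq_sqrt hD.le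
  have hrs : r < s := by
    rw [hrdef]
    exact (Real.sqrt_lt' hs0).mpr (by nlinarith)
  obtain ⟨u, v, hu0, hv0, hne, h1, h2⟩ :
      ∃ u v : ℝ, 0 < u ∧ 0 < v ∧ u ≠ v ∧
        u*(v^2+γ) = β*v^2+1 ∧ v*(u^2+γ) = β*u^2+1 := by
    refine ⟨(s+r)/2, (s-r)/2, by linarith, by linarith, by intro h; linarith, ?_, ?_⟩
    · have hsum : (s+r)/2 + (s-r)/2 = s := by ring
      have hprod : ((s+r)/2) * ((s-r)/2) = β*s + γ := by
        linear_combination (-1/4) * hr2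
      linear_combination ((s-r)/2 + β) * hprod + (γ - β*((s-r)/2)) * hsum + hkey
    · have hsum : (s+r)/2 + (s-r)/2 = s := by ring
      have hprod : ((s+r)/2) * ((s-r)/2) = β*s + γ := by
        linear_combination (-1/4) * hr2
      linear_combination ((s+r)/2 + β) * hprod + (γ - β*((s+r)/2)) * hsum + hkey
  refine ⟨u^2, v^2, by positivity, by positivity, ?_, ?_, ?_⟩
  · intro h
    apply hne
    have hz : (u - v) * (u + v) = 0 := by linear_combination h
    rcases mul_eq_zero.mp hz with h' | h'
    · linarith
    · linarith
  · have hd : v^2 + γ ≠ 0 := by positivity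
    have e1 : (β*v^2+1)/(v^2+γ) = u := by
      rw [div_eq_iff hd]; linear_combination -h1
    rw [e1]
  · have hd : u^2 + γ ≠ 0 := by positivity
    have e2 : (β*u^2+1)/(u^2+γ) = v := by
      rw [div_eq_iff hd]; linear_combination -h2
    rw [e2]
end

section
/- Let d ≥ 2 be an integer and let A be a real number with A > d^d/(d+1)^{d+1}. Then for every real x with 0 ≤ x and A x^d < 1, it holds that 1 - x + A x^{d+1} > 0. -/
/-- Let `d ≥ 2` be an integer and `A > d^d/(d+1)^{d+1}`. Then for every real `x ≥ 0` with
`A x^d < 1` it holds that `1 - x + A x^{d+1} > 0`. -/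
theorem one_sub_add_pos (d : ℕ) (hd : 2 ≤ d) (A : ℝ)
    (hA : A > (d : ℝ) ^ d / ((d : ℝ) + 1) ^ (d + 1))
    (x : ℝ) (hx : 0 ≤ x) (hx' : A * x ^ d < 1) :
    0 < 1 - x + A * x ^ (d + 1) := by
  set D : ℝ := (d : ℝ) with hD
  have hD2 : (2:ℝ) ≤ D := by rw [hD]; exact_mod_cast hd
  have hD0 : 0 < D := by linarith
  have hD1 : 0 < D + 1 := by linarith
  set c : ℝ := D ^ d / (D + 1) ^ (d + 1) with hc
  set t : ℝ := D * x / (D + 1) with ht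
  have ht0 : 0 ≤ t := by positivity
  have hb := one_add_mul_le_pow (a := t - 1) (by linarith) (d + 1)
  have h1 : 1 + (t - 1) = t := by ring
  rw [h1] at hb
  have h2 : t ^ (d + 1) = D * (c * x ^ (d + 1)) := by
    rw [ht, hc, div_pow, mul_pow, pow_succ D d]
    ring
  have h3 : ((d + 1 : ℕ) : ℝ) = D + 1 := by push_cast; ring
  rw [h3, h2] at hb
  have h4 : 1 + (D + 1) * (t - 1) = D * x - D := by
    rw [ht]; field_simp; ring
  rw [h4] at hb
  have hkey : x - 1 ≤ c * x ^ (d + 1) := by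
    nlinarith [hb, hD0]
  rcases eq_or_lt_of_le hx with h0 | h0
  · simp [← h0]
  · have hlt : c * x ^ (d + 1) < A * x ^ (d + 1) :=
      mul_lt_mul_of_pos_right hA (by positivity)
    linarith
end
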